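/- Let T(x) = 2x mod 1 on ℝ/ℤ. The set X_∞ = {x ∈ ℝ/ℤ : liminf_{n→∞} (1/n)∑_{i=1}^{n} log₂ d(T^i x, x) = −∞} is residual (contains a dense G_δ set) in ℝ/ℤ. -/

import Mathlib

/-
Write `d(Tⁿx, x) = ‖(2ⁿ - 1) • x‖`. Every solution `y` of `(2ⁿ - 1) • y = t`, with `t` a small
nonzero point, returns close to but not onto itself at time `n`, and such solutions lie within
`1/(2(2ⁿ - 1))` of any given point. Hence for each `N` the points `x` with
`0 < d(Tⁿx, x) < 2^(-Nn)` for some `n > N` form a dense open set. Distances on the circle are at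
most `1/2`, so every summand `log₂ d(Tⁱx, x)` is nonpositive, and on the intersection of these
sets the `n`-th average drops below `-N` at some `n > N`, for every `N`.
-/

/-- The doubling map on the circle `ℝ/ℤ`. -/
noncomputable def double : AddCircle (1:ℝ) → AddCircle (1:ℝ) := fun z => z + z

open Filter Set

theorem AddCircle.exists_dist_le_nsmul_eq {p : ℝ} [Fact (0 < p)] {M : ℕ} (hM : 0 < M)
    (x z : AddCircle p) : ∃ y, dist y x ≤ p / (2 * M) ∧ M • y = z := by
  induction x using QuotientAddGroup.induction_on with | H x₀ => ?_
  induction z using QuotientAddGroup.induction_on with | H t => ?_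
  have hp : 0 < p := Fact.out
  have hM' : (0 : ℝ) < M := Nat.cast_pos.mpr hM
  set k := round ((M * x₀ - t) / p)
  refine ⟨((t + k * p) / M : ℝ), ?_, ?_⟩
  · have hround : |(k : ℝ) - (M * x₀ - t) / p| ≤ 1 / 2 := by
      rw [abs_sub_comm]; exact abs_sub_round _
    have hdiff : (t + k * p) / M - x₀ = p * ((k : ℝ) - (M * x₀ - t) / p) / M := by
      field_simp; ring
    calc dist (((t + k * p) / M : ℝ) : AddCircle p) x₀
        ≤ |(t + k * p) / M - x₀| := by
          rw [dist_eq_norm, ← AddCircle.coe_sub]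
          exact QuotientAddGroup.norm_mk_le_norm
      _ = p * |(k : ℝ) - (M * x₀ - t) / p| / M := by
          rw [hdiff, abs_div, abs_mul, abs_of_pos hp, abs_of_pos hM']
      _ ≤ p * (1 / 2) / M := by gcongr
      _ = p / (2 * M) := by ring
  · rw [← AddCircle.coe_nsmul, nsmul_eq_mul, mul_div_cancel₀ _ hM'.ne', AddCircle.coe_add,
      ← zsmul_eq_mul, AddCircle.coe_zsmul, AddCircle.coe_period, smul_zero, add_zero]

theorem double_iterate (n : ℕ) (x : AddCircle (1 : ℝ)) : double^[n] x = 2 ^ n • x := by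
  induction n with
  | zero => simp
  | succ n ih =>
    rw [Function.iterate_succ_apply', ih, pow_succ, mul_nsmul, two_nsmul]
    rfl

theorem dist_double_iterate_self (n : ℕ) (x : AddCircle (1 : ℝ)) :
    dist (double^[n] x) x = ‖(2 ^ n - 1) • x‖ := by
  rw [dist_eq_norm, double_iterate, sub_nsmul x Nat.one_le_two_pow, one_nsmul, sub_eq_add_neg]

theorem continuous_double : Continuous double := continuous_id.add continuous_id

theorem logb_dist_double_iterate_self_nonpos (n : ℕ) (x : AddCircle (1 : ℝ)) :
    Real.logb 2 (dist (double^[n] x) x) ≤ 0 := by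
  refine Real.logb_nonpos one_lt_two dist_nonneg ?_
  rw [dist_eq_norm]
  linarith [AddCircle.norm_le_half_period 1 (x := double^[n] x - x) one_ne_zero, abs_one (α := ℝ)]

def closeReturnSet (N : ℕ) : Set (AddCircle (1 : ℝ)) :=
  ⋃ n > N, {x | dist (double^[n] x) x ∈ Ioo 0 ((2 : ℝ) ^ (-(N * n : ℝ)))}

theorem isOpen_closeReturnSet (N : ℕ) : IsOpen (closeReturnSet N) :=
  isOpen_biUnion fun n _ =>
    isOpen_Ioo.preimage ((continuous_double.iterate n).dist continuous_id)

theorem dense_closeReturnSet (N : ℕ) : Dense (closeReturnSet N) := by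
  rw [Metric.dense_iff]
  intro x ε hε
  obtain ⟨n, hn⟩ := exists_nat_gt (max (N : ℝ) (1 / ε))
  have hNn : N < n := by exact_mod_cast (le_max_left _ _).trans_lt hn
  have hn0 : (0 : ℝ) < n := by exact_mod_cast Nat.zero_lt_of_lt hNn
  set M := 2 ^ n - 1
  have hnM : n ≤ M := Nat.le_sub_one_of_lt n.lt_two_pow_self
  set η : ℝ := (2 : ℝ) ^ (-(N * n : ℝ))
  have hη : 0 < η := by positivity
  have hη1 : η ≤ 1 :=
    Real.rpow_le_one_of_one_le_of_nonpos one_le_two (by simp only [neg_nonpos]; positivity)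
  obtain ⟨y, hyx, hy⟩ := AddCircle.exists_dist_le_nsmul_eq
    (Nat.zero_lt_of_lt hNn |>.trans_le hnM) x ((η / 2 : ℝ) : AddCircle (1 : ℝ))
  refine ⟨y, ?_, mem_biUnion hNn ?_⟩
  · have hnM' : (n : ℝ) ≤ M := by exact_mod_cast hnM
    calc dist y x ≤ 1 / (2 * M) := hyx
      _ ≤ 1 / n := by gcongr; linarith
      _ < ε := (div_lt_comm₀ hε hn0).mp ((le_max_right _ _).trans_lt hn)
  · rw [mem_ofPred_eq, dist_double_iterate_self, hy,
      (AddCircle.norm_coe_eq_abs_iff 1 one_ne_zero).mpr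
        (by rw [abs_one, abs_of_pos]; all_goals linarith),
      abs_of_pos (half_pos hη)]
    exact ⟨half_pos hη, half_lt_self hη⟩

theorem EReal.liminf_eq_bot_of_frequently_lt {α : Type*} {f : Filter α} {u : α → EReal}
    (h : ∀ C : ℝ, ∃ᶠ a in f, u a < C) : liminf u f = ⊥ := by
  rw [EReal.eq_bot_iff_forall_lt]
  intro C
  calc liminf u f ≤ ((C - 1 : ℝ) : EReal) :=
        liminf_le_of_frequently_le' ((h (C - 1)).mono fun _ ha => ha.le)
    _ < C := EReal.coe_lt_coe_iff.mpr (by linarith)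

theorem average_logb_dist_lt_of_mem_closeReturnSet {N : ℕ} {x : AddCircle (1 : ℝ)}
    (hx : x ∈ closeReturnSet N) : ∃ n > N,
      (1 / n : ℝ) * ∑ i ∈ Finset.Icc 1 n, Real.logb 2 (dist (double^[i] x) x) < -N := by
  simp only [closeReturnSet, mem_iUnion, mem_ofPred_eq, mem_Ioo] at hx
  obtain ⟨n, hNn, hpos, hlt⟩ := hx
  have hn0 : (0 : ℝ) < n := by exact_mod_cast Nat.zero_lt_of_lt hNn
  have hsum : ∑ i ∈ Finset.Icc 1 n, Real.logb 2 (dist (double^[i] x) x)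
      ≤ Real.logb 2 (dist (double^[n] x) x) := by
    rw [← Finset.add_sum_erase _ _ (Finset.mem_Icc.mpr ⟨Nat.zero_lt_of_lt hNn, le_rfl⟩)]
    exact add_le_of_nonpos_right
      (Finset.sum_nonpos fun i _ => logb_dist_double_iterate_self_nonpos i x)
  have hlog : Real.logb 2 (dist (double^[n] x) x) < -(N * n) :=
    (Real.logb_lt_iff_lt_rpow one_lt_two hpos).mpr hlt
  refine ⟨n, hNn, ?_⟩
  calc (1 / n : ℝ) * ∑ i ∈ Finset.Icc 1 n, Real.logb 2 (dist (double^[i] x) x)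
      < (1 / n) * -(N * n) := by gcongr; exact hsum.trans_lt hlog
    _ = -N := by field_simp

theorem stmt18 :
    {x : AddCircle (1:ℝ) |
        Filter.liminf
          (fun n : ℕ => (((1 / n : ℝ) *
              ∑ i ∈ Finset.Icc 1 n, Real.logb 2 (dist (double^[i] x) x) : ℝ) : EReal))
          Filter.atTop = ⊥} ∈ residual (AddCircle (1:ℝ)) := by
  refine mem_of_superset (countable_iInter_mem.mpr fun N =>
    residual_of_dense_open (isOpen_closeReturnSet N) (dense_closeReturnSet N)) fun x hx => ?_
  refine EReal.liminf_eq_bot_of_frequently_lt fun C => frequently_atTop.mpr fun m => ?_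
  obtain ⟨n, hn, hlt⟩ := average_logb_dist_lt_of_mem_closeReturnSet
    (mem_iInter.mp hx (max m ⌈-C⌉₊))
  refine ⟨n, (le_max_left _ _).trans hn.le, EReal.coe_lt_coe_iff.mpr (hlt.trans_le ?_)⟩
  have hC : -C ≤ (max m ⌈-C⌉₊ : ℕ) := (Nat.le_ceil _).trans (by exact_mod_cast le_max_right _ _)
  linarith
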